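/- Let (A_m)_{m≥0} be a formal orbit portrait of valence N ≥ 2 with degrees (d_m)_{m≥1}, let m ≥ 0, and let (a,b) be a non-critical complementary arc of A_m of length ℓ < 1/d_{m+1}. Then the map θ ↦ d_{m+1}·θ is injective on the open arc (a,b) and maps it onto the open arc (d_{m+1}·a, d_{m+1}·b), which is a complementary arc of A_{m+1} of length d_{m+1}ℓ. Moreover, distinct non-critical complementary arcs of A_m are mapped onto distinct complementary arcs of A_{m+1}. -/
import Mathlib


/-- The unique representative in `[0,1)` of `b - a`; for `a ≠ b` this is the
unique representative of `b − a` in `(0,1)`, the length `ℓ(a,b)` of the arc from `a` to `b`. -/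
noncomputable def arcLen (a b : UnitAddCircle) : ℝ :=
  ((AddCircle.equivIco 1 0) (b - a) : ℝ)

/-- The open arc `(a,b) = {a + t : 0 < t < ℓ(a,b)}` in `ℝ/ℤ`. -/
def openArc (a b : UnitAddCircle) : Set UnitAddCircle :=
  {x | ∃ t : ℝ, 0 < t ∧ t < arcLen a b ∧ x = a + (t : UnitAddCircle)}

/-- `(a,b,c)` is in positive cyclic order: `ℓ(a,b) < ℓ(a,c)`. -/
def PosCyclic (a b c : UnitAddCircle) : Prop := arcLen a b < arcLen a c

/-- A formal orbit portrait of valence `N` with degrees `d`: a sequence of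
`N`-element subsets `A m` of `ℝ/ℤ` such that `θ ↦ d_{m+1}·θ` maps `A m`
bijectively onto `A (m+1)` and carries every triple of pairwise distinct points
of `A m` in positive cyclic order to a triple in positive cyclic order. -/
def IsFormalPortrait (N : ℕ) (d : ℕ → ℕ) (A : ℕ → Set UnitAddCircle) : Prop :=
  ∀ m : ℕ,
    (A m).Finite ∧ (A m).ncard = N ∧
    Set.BijOn (fun θ => d (m + 1) • θ) (A m) (A (m + 1)) ∧
    ∀ a ∈ A m, ∀ b ∈ A m, ∀ c ∈ A m, a ≠ b → a ≠ c → b ≠ c →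
      PosCyclic a b c →
        PosCyclic (d (m + 1) • a) (d (m + 1) • b) (d (m + 1) • c)

/-- `(a,b)` is a complementary arc of `A`: `a, b ∈ A`, `a ≠ b`, and the open
arc `(a,b)` contains no point of `A`. -/
def IsComplArc (A : Set UnitAddCircle) (a b : UnitAddCircle) : Prop :=
  a ≠ b ∧ a ∈ A ∧ b ∈ A ∧ openArc a b ∩ A = ∅
lemma arcLen_mem (a b : UnitAddCircle) : arcLen a b ∈ Set.Ico (0:ℝ) 1 := by
  have h := ((AddCircle.equivIco 1 0) (b - a)).2
  simpa [arcLen] using h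

lemma coe_arcLen (a b : UnitAddCircle) : ((arcLen a b : ℝ) : UnitAddCircle) = b - a :=
  (AddCircle.equivIco 1 0).symm_apply_apply (b - a)

lemma eq_add_arcLen (a b : UnitAddCircle) : b = a + ((arcLen a b : ℝ) : UnitAddCircle) := by
  rw [coe_arcLen]; abel

lemma arcLen_add_coe (a : UnitAddCircle) (x : ℝ) :
    arcLen a (a + (x : UnitAddCircle)) = Int.fract x := by
  have : a + (x : UnitAddCircle) - a = (x : UnitAddCircle) := by abel
  rw [arcLen, this, AddCircle.coe_equivIco_mk_apply]
  simp

lemma arcLen_add_coe_of_mem (a : UnitAddCircle) {x : ℝ} (h0 : 0 ≤ x) (h1 : x < 1) :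
    arcLen a (a + (x : UnitAddCircle)) = x := by
  rw [arcLen_add_coe, Int.fract_eq_self.2 ⟨h0, h1⟩]

lemma arcLen_eq_zero_iff {a b : UnitAddCircle} : arcLen a b = 0 ↔ a = b := by
  constructor
  · intro h
    have := coe_arcLen a b
    rw [h] at this
    simp at this
    rw [eq_comm, ← sub_eq_zero]; exact this.symm
  · rintro rfl
    have : a = a + ((0:ℝ) : UnitAddCircle) := by simp
    nth_rewrite 2 [this]
    rw [arcLen_add_coe]; simp

lemma mem_openArc {a b x : UnitAddCircle} :
    x ∈ openArc a b ↔ 0 < arcLen a x ∧ arcLen a x < arcLen a b := by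
  constructor
  · rintro ⟨t, ht0, htL, rfl⟩
    have h1 : t < 1 := htL.trans (arcLen_mem a b).2
    rw [arcLen_add_coe_of_mem a ht0.le h1]
    exact ⟨ht0, htL⟩
  · rintro ⟨h0, hL⟩
    exact ⟨arcLen a x, h0, hL, eq_add_arcLen a x⟩

lemma arcLen_add_arcLen {a b : UnitAddCircle} (h : a ≠ b) :
    arcLen a b + arcLen b a = 1 := by
  have hc : ((arcLen a b + arcLen b a : ℝ) : UnitAddCircle) = 0 := by
    rw [AddCircle.coe_add, coe_arcLen, coe_arcLen]
    abel
  rw [AddCircle.coe_eq_zero_iff] at hc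
  obtain ⟨n, hn⟩ := hc
  have h1 : 0 < arcLen a b := lt_of_le_of_ne (arcLen_mem a b).1
    (fun hh => h (arcLen_eq_zero_iff.1 hh.symm))
  have h2 : 0 < arcLen b a := lt_of_le_of_ne (arcLen_mem b a).1
    (fun hh => h.symm (arcLen_eq_zero_iff.1 hh.symm))
  have h3 := (arcLen_mem a b).2
  have h4 := (arcLen_mem b a).2
  have hn' : (n : ℝ) = arcLen a b + arcLen b a := by simpa using hn
  have : n = 1 := by
    have : (0:ℝ) < n := by rw [hn']; linarith
    have : (n:ℝ) < 2 := by rw [hn']; linarith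
    have h5 : 0 < n := by exact_mod_cast ‹(0:ℝ) < n›
    have h6 : n < 2 := by exact_mod_cast ‹(n:ℝ) < 2›
    omega
  rw [this] at hn'; simpa using hn'.symm

lemma smul_add_coe (d : ℕ) (a : UnitAddCircle) (x : ℝ) :
    d • (a + (x : UnitAddCircle)) = d • a + ((d * x : ℝ) : UnitAddCircle) := by
  rw [smul_add]
  congr 1
  rw [← AddCircle.coe_nsmul]
  norm_num [nsmul_eq_mul]

lemma arcLen_smul {a b : UnitAddCircle} {d : ℕ}
    (hL : (d : ℝ) * arcLen a b < 1) :
    arcLen (d • a) (d • b) = (d : ℝ) * arcLen a b := by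
  have hb := eq_add_arcLen a b
  have h0 : (0:ℝ) ≤ (d : ℝ) * arcLen a b :=
    mul_nonneg (Nat.cast_nonneg d) (arcLen_mem a b).1
  calc arcLen (d • a) (d • b) = arcLen (d • a) (d • a + ((d * arcLen a b : ℝ) : UnitAddCircle)) := by
        rw [← smul_add_coe, ← hb]
    _ = (d : ℝ) * arcLen a b := arcLen_add_coe_of_mem _ h0 hL

lemma arcLen_pos {a b : UnitAddCircle} (h : a ≠ b) : 0 < arcLen a b :=
  lt_of_le_of_ne (arcLen_mem a b).1 (fun hh => h (arcLen_eq_zero_iff.1 hh.symm))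

lemma openArc_inj {U V U' V' : UnitAddCircle} (hUV : U ≠ V) (hUV' : U' ≠ V')
    (h : openArc U V = openArc U' V') : U = U' ∧ V = V' := by
  set L := arcLen U V with hLdef
  set L' := arcLen U' V' with hLdef'
  have hL0 : 0 < L := arcLen_pos hUV
  have hL1 : L < 1 := (arcLen_mem U V).2
  have hL0' : 0 < L' := arcLen_pos hUV'
  have hL1' : L' < 1 := (arcLen_mem U' V').2
  have hUU' : U = U' := by
    by_contra hne
    have hU'notin : U' ∉ openArc U V := by
      rw [h, mem_openArc, arcLen_eq_zero_iff.2 rfl]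
      simp
    have hUnotin : U ∉ openArc U' V' := by
      rw [← h, mem_openArc, arcLen_eq_zero_iff.2 rfl]
      simp
    have hα : L ≤ arcLen U U' := by
      by_contra hc
      exact hU'notin (mem_openArc.2 ⟨arcLen_pos hne, not_le.1 hc⟩)
    have hβ : L' ≤ arcLen U' U := by
      by_contra hc
      exact hUnotin (mem_openArc.2 ⟨arcLen_pos (Ne.symm hne), not_le.1 hc⟩)
    have hsum : arcLen U U' + arcLen U' U = 1 := arcLen_add_arcLen hne
    -- the point U + (L/2)
    have hx1 : U + ((L/2 : ℝ) : UnitAddCircle) ∈ openArc U V := by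
      refine ⟨L/2, by linarith, by linarith, rfl⟩
    rw [h] at hx1
    have hxL : arcLen U' (U + ((L/2 : ℝ) : UnitAddCircle)) < L' := (mem_openArc.1 hx1).2
    have hUeq : U = U' + ((arcLen U' U : ℝ) : UnitAddCircle) := eq_add_arcLen U' U
    have hrepr : U + ((L/2 : ℝ) : UnitAddCircle)
        = U' + ((arcLen U' U + L/2 : ℝ) : UnitAddCircle) := by
      rw [AddCircle.coe_add]
      nth_rewrite 1 [hUeq]
      abel
    have hmem : arcLen U' (U + ((L/2 : ℝ) : UnitAddCircle)) = arcLen U' U + L/2 := by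
      rw [hrepr]
      exact arcLen_add_coe_of_mem _ (by linarith) (by linarith)
    linarith [hmem ▸ hxL]
  subst hUU'
  have hLL' : L = L' := by
    rcases lt_trichotomy L L' with hc | hc | hc
    · exfalso
      have : U + ((L : ℝ) : UnitAddCircle) ∈ openArc U V' := ⟨L, hL0, hc, rfl⟩
      rw [← h, mem_openArc] at this
      rw [arcLen_add_coe_of_mem _ hL0.le hL1] at this
      exact absurd this.2 (lt_irrefl L)
    · exact hc
    · exfalso
      have : U + ((L' : ℝ) : UnitAddCircle) ∈ openArc U V := ⟨L', hL0', hc, rfl⟩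
      rw [h, mem_openArc] at this
      rw [arcLen_add_coe_of_mem _ hL0'.le hL1'] at this
      exact absurd this.2 (lt_irrefl L')
  refine ⟨rfl, ?_⟩
  have h1 : V = U + ((L : ℝ) : UnitAddCircle) := eq_add_arcLen U V
  have h2 : V' = U + ((L' : ℝ) : UnitAddCircle) := eq_add_arcLen U V'
  rw [h1, h2, hLL']

/-- A non-critical complementary arc of `A m` is mapped injectively onto a
complementary arc of `A (m+1)` of `d_{m+1}` times the length, and distinct
non-critical complementary arcs have distinct image arcs. -/
theorem noncritical_arc_maps_diffeomorphically (N : ℕ) (hN : 2 ≤ N) (d : ℕ → ℕ)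
    (hd : ∀ m, 1 ≤ m → 2 ≤ d m)
    (A : ℕ → Set UnitAddCircle) (hA : IsFormalPortrait N d A) (m : ℕ)
    (a b : UnitAddCircle) (hab : IsComplArc (A m) a b)
    (hnc : arcLen a b < 1 / (d (m + 1) : ℝ)) :
    Set.InjOn (fun θ => d (m + 1) • θ) (openArc a b) ∧
    (fun θ => d (m + 1) • θ) '' openArc a b = openArc (d (m + 1) • a) (d (m + 1) • b) ∧
    IsComplArc (A (m + 1)) (d (m + 1) • a) (d (m + 1) • b) ∧
    arcLen (d (m + 1) • a) (d (m + 1) • b) = (d (m + 1) : ℝ) * arcLen a b ∧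
    ∀ a' b' : UnitAddCircle, IsComplArc (A m) a' b' →
      arcLen a' b' < 1 / (d (m + 1) : ℝ) → (a, b) ≠ (a', b') →
      openArc (d (m + 1) • a) (d (m + 1) • b) ≠
        openArc (d (m + 1) • a') (d (m + 1) • b') := by
  obtain ⟨hne, haA, hbA, hempty⟩ := hab
  obtain ⟨-, -, hbij, hcyc⟩ := hA m
  set D := d (m + 1) with hDdef
  have hD2 : 2 ≤ D := hd (m + 1) (by omega)
  have hDpos : (0:ℝ) < D := by
    have : 0 < D := by omega
    exact_mod_cast this
  set L := arcLen a b with hLdef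
  have hL0 : 0 < L := arcLen_pos hne
  have hDL1 : (D:ℝ) * L < 1 := by
    have h1 : L < 1 / (D:ℝ) := hnc
    rw [lt_div_iff₀ hDpos] at h1
    linarith [h1]
  have hsmul : arcLen (D • a) (D • b) = (D:ℝ) * L := arcLen_smul hDL1
  have hDL0 : (0:ℝ) < (D:ℝ) * L := by positivity
  have hneD : D • a ≠ D • b := by
    intro hc
    rw [← hc, arcLen_eq_zero_iff.2 rfl] at hsmul
    linarith
  -- injectivity
  have hinj : Set.InjOn (fun θ => D • θ) (openArc a b) := by
    rintro x ⟨t, ht0, htL, rfl⟩ y ⟨s, hs0, hsL, rfl⟩ hxy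
    simp only [smul_add_coe] at hxy
    have hts : ((D * t : ℝ) : UnitAddCircle) = ((D * s : ℝ) : UnitAddCircle) :=
      add_left_cancel hxy
    have hmt : (D:ℝ) * t ∈ Set.Ico (0:ℝ) (0 + 1) := by
      constructor
      · positivity
      · rw [zero_add]
        calc (D:ℝ) * t < (D:ℝ) * L := by
              exact mul_lt_mul_of_pos_left htL hDpos
          _ < 1 := hDL1
    have hms : (D:ℝ) * s ∈ Set.Ico (0:ℝ) (0 + 1) := by
      constructor
      · positivity
      · rw [zero_add]
        calc (D:ℝ) * s < (D:ℝ) * L := by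
              exact mul_lt_mul_of_pos_left hsL hDpos
          _ < 1 := hDL1
    have : (D:ℝ) * t = (D:ℝ) * s :=
      (AddCircle.coe_eq_coe_iff_of_mem_Ico hmt hms).1 hts
    have hts' : t = s := mul_left_cancel₀ (ne_of_gt hDpos) this
    rw [hts']
  -- image
  have himg : (fun θ => D • θ) '' openArc a b = openArc (D • a) (D • b) := by
    ext y
    constructor
    · rintro ⟨x, ⟨t, ht0, htL, rfl⟩, rfl⟩
      refine ⟨(D:ℝ) * t, by positivity, ?_, ?_⟩
      · rw [hsmul]
        exact mul_lt_mul_of_pos_left htL hDpos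
      · exact smul_add_coe D a t
    · rintro ⟨s, hs0, hsL, rfl⟩
      rw [hsmul] at hsL
      refine ⟨a + ((s / (D:ℝ) : ℝ) : UnitAddCircle), ⟨s / (D:ℝ), by positivity, ?_, rfl⟩, ?_⟩
      · rw [div_lt_iff₀ hDpos]
        linarith
      · simp only [smul_add_coe]
        congr 2
        field_simp
  -- complementary arc
  have hcompl : IsComplArc (A (m + 1)) (D • a) (D • b) := by
    refine ⟨hneD, hbij.mapsTo haA, hbij.mapsTo hbA, ?_⟩
    rw [Set.eq_empty_iff_forall_notMem]
    rintro y ⟨hyArc, hyA⟩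
    obtain ⟨x, hxA, rfl⟩ := hbij.surjOn hyA
    simp only at hyArc
    rw [mem_openArc, hsmul] at hyArc
    have hxa : x ≠ a := by
      rintro rfl
      rw [arcLen_eq_zero_iff.2 rfl] at hyArc
      exact absurd hyArc.1 (lt_irrefl 0)
    have hxb : x ≠ b := by
      rintro rfl
      rw [hsmul] at hyArc
      exact absurd hyArc.2 (lt_irrefl _)
    have hxarc : x ∉ openArc a b := by
      intro hx
      have : x ∈ openArc a b ∩ A m := ⟨hx, hxA⟩
      rw [hempty] at this
      exact this
    have hgt : L < arcLen a x := by
      rcases lt_trichotomy (arcLen a x) L with hc | hc | hc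
      · exact absurd (mem_openArc.2 ⟨arcLen_pos (Ne.symm hxa), hc⟩) hxarc
      · exfalso
        apply hxb
        have h1 : x = a + ((arcLen a x : ℝ) : UnitAddCircle) := eq_add_arcLen a x
        have h2 : b = a + ((L : ℝ) : UnitAddCircle) := eq_add_arcLen a b
        rw [h1, h2, hc]
      · exact hc
    have hpc := hcyc a haA b hbA x hxA hne (Ne.symm hxa) (Ne.symm hxb) hgt
    unfold D at hyArc hsmul
    rw [PosCyclic, hsmul] at hpc
    linarith [hyArc.2, hpc]
  refine ⟨hinj, himg, hcompl, hsmul, ?_⟩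
  intro a' b' hab' hnc' hpair heq
  obtain ⟨hne', ha'A, hb'A, -⟩ := hab'
  have hDL1' : (D:ℝ) * arcLen a' b' < 1 := by
    have h1 : arcLen a' b' < 1 / (D:ℝ) := hnc'
    rw [lt_div_iff₀ hDpos] at h1
    linarith
  have hsmul' : arcLen (D • a') (D • b') = (D:ℝ) * arcLen a' b' := arcLen_smul hDL1'
  have hneD' : D • a' ≠ D • b' := by
    intro hc
    rw [← hc, arcLen_eq_zero_iff.2 rfl] at hsmul'
    have := arcLen_pos hne'
    nlinarith
  obtain ⟨h1, h2⟩ := openArc_inj hneD hneD' heq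
  have ha : a = a' := hbij.injOn haA ha'A h1
  have hb : b = b' := hbij.injOn hbA hb'A h2
  exact hpair (by rw [ha, hb])
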